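/- In a Fresse left semi-model category, any morphism that has the right lifting property against all core cofibrations (cofibrations with cofibrant domain) is a weak equivalence. -/
import Mathlib


open CategoryTheory CategoryTheory.Limits

universe v u

variable {C : Type u} [Category.{v} C]

/-- `f` is a retract of `g` in the arrow category. -/
def IsRetractOf {X Y Z W : C} (f : X ⟶ Y) (g : Z ⟶ W) : Prop :=
  ∃ (u : X ⟶ Z) (r : Z ⟶ X) (v : Y ⟶ W) (s : W ⟶ Y),
    u ≫ r = 𝟙 X ∧ v ≫ s = 𝟙 Y ∧ u ≫ g = f ≫ v ∧ g ≫ s = r ≫ f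

/-- A Fresse left semi-model category: weak equivalences satisfying 2-out-of-3 and, with
cofibrations and fibrations, closed under retracts; factorizations of maps with cofibrant
domain; lifting of core cofibrations against trivial fibrations and of trivial core
cofibrations against fibrations; fibrations stable under pullback; initial object
cofibrant. -/
structure FresseLeft (C : Type u) [Category.{v} C] [HasLimits C] [HasColimits C] where
  W : MorphismProperty C
  Cof : MorphismProperty C
  Fib : MorphismProperty C
  W_comp : ∀ {X Y Z : C} (f : X ⟶ Y) (g : Y ⟶ Z), W f → W g → W (f ≫ g)
  W_cancel_left : ∀ {X Y Z : C} (f : X ⟶ Y) (g : Y ⟶ Z), W g → W (f ≫ g) → W f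
  W_cancel_right : ∀ {X Y Z : C} (f : X ⟶ Y) (g : Y ⟶ Z), W f → W (f ≫ g) → W g
  W_retract : ∀ {X Y X' Y' : C} (f : X ⟶ Y) (f' : X' ⟶ Y'),
    IsRetractOf f f' → W f' → W f
  cof_retract : ∀ {X Y X' Y' : C} (f : X ⟶ Y) (f' : X' ⟶ Y'),
    IsRetractOf f f' → Cof f' → Cof f
  fib_retract : ∀ {X Y X' Y' : C} (f : X ⟶ Y) (f' : X' ⟶ Y'),
    IsRetractOf f f' → Fib f' → Fib f
  fact_cof_trivFib : ∀ {X Y : C} (f : X ⟶ Y), Cof (initial.to X) →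
    ∃ (Z : C) (i : X ⟶ Z) (p : Z ⟶ Y), Cof i ∧ Fib p ∧ W p ∧ i ≫ p = f
  fact_trivCof_fib : ∀ {X Y : C} (f : X ⟶ Y), Cof (initial.to X) →
    ∃ (Z : C) (i : X ⟶ Z) (p : Z ⟶ Y), Cof i ∧ W i ∧ Fib p ∧ i ≫ p = f
  lift_cof_trivFib : ∀ {A B X Y : C} (i : A ⟶ B) (p : X ⟶ Y),
    Cof i → Cof (initial.to A) → Fib p → W p → HasLiftingProperty i p
  lift_trivCof_fib : ∀ {A B X Y : C} (i : A ⟶ B) (p : X ⟶ Y),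
    Cof i → Cof (initial.to A) → W i → Fib p → HasLiftingProperty i p
  fib_pullback : ∀ {P X Y Z : C} (fst : P ⟶ X) (snd : P ⟶ Y) (f : X ⟶ Z) (g : Y ⟶ Z),
    IsPullback fst snd f g → Fib f → Fib snd
  initial_cofibrant : Cof (𝟙 (⊥_ C))

namespace FresseLeft

variable [HasLimits C] [HasColimits C] (M : FresseLeft C)

/-- Cofibrant objects. -/
def Cofibrant (X : C) : Prop := M.Cof (initial.to X)

/-- Fibrant objects. -/
def Fibrant (X : C) : Prop := M.Fib (terminal.from X)

end FresseLeft

/-- In a Fresse left semi-model category, any morphism with the right lifting property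
against all core cofibrations (cofibrations with cofibrant domain) is a weak
equivalence. -/
theorem rlp_core_cof_is_weq [HasLimits C] [HasColimits C] (M : FresseLeft C)
    {X Y : C} (f : X ⟶ Y)
    (h : ∀ {A B : C} (i : A ⟶ B), M.Cof i → M.Cofibrant A → HasLiftingProperty i f) :
    M.W f := by
  -- ⊥ is cofibrant
  have hbot : M.Cof (initial.to (⊥_ C)) := by
    have : initial.to (⊥_ C) = 𝟙 (⊥_ C) := initial.hom_ext _ _
    rw [this]; exact M.initial_cofibrant
  -- cofibrant replacement of X: p : Z → X trivial fibration, Z cofibrant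
  obtain ⟨Z, i, p, hi, hpF, hpW, hip⟩ := M.fact_cof_trivFib (initial.to X) hbot
  have hZ : M.Cofibrant Z := by
    have : initial.to Z = i := initial.hom_ext _ _
    show M.Cof (initial.to Z)
    rw [this]; exact hi
  -- factor p ≫ f as core cofibration followed by trivial fibration
  obtain ⟨Z₂, i₂, p₂, hi₂, hp₂F, hp₂W, hfac⟩ := M.fact_cof_trivFib (p ≫ f) hZ
  have hZ₂ : M.Cofibrant Z := hZ
  -- lifting property of i₂ against p ≫ f
  haveI h1 : HasLiftingProperty i₂ p := M.lift_cof_trivFib i₂ p hi₂ hZ hpF hpW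
  haveI h2 : HasLiftingProperty i₂ f := h i₂ hi₂ hZ
  haveI h3 : HasLiftingProperty i₂ (p ≫ f) := inferInstance
  have sq : CommSq (𝟙 Z) i₂ (p ≫ f) p₂ := ⟨by simp [hfac]⟩
  obtain ⟨⟨⟨l, hl1, hl2⟩⟩⟩ := h3.sq_hasLift sq
  -- p ≫ f is a retract of p₂
  have hretr : IsRetractOf (p ≫ f) p₂ :=
    ⟨i₂, l, 𝟙 Y, 𝟙 Y, hl1, Category.comp_id _, by simp [hfac], by simp [hl2]⟩
  have hW : M.W (p ≫ f) := M.W_retract _ _ hretr hp₂W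
  exact M.W_cancel_right p f hpW hW
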